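/- If x̄ is a local maximizer of f on dom f, or if σ̄ is a local maximizer of D on S⁻, then ‖Hv‖ ≤ 1 for all unit vectors v ∈ ℝᵐ. Conversely, if ‖Hv‖ < 1 for all unit vectors v ∈ ℝᵐ, then x̄ is a strict local maximizer of f and σ̄ is a strict local maximizer of D. In particular, if A_i x̄ = b_i for all i = 1,…,m (equivalently d_i = 0 for all i), then x̄ and σ̄ are strict local maximizers of f and D, respectively. -/

import Mathlib

open Matrix Set

noncomputable section

/-- The quadratic function `x ↦ ½⟨x, A x⟩ − ⟨b, x⟩ + c`. -/
def qf {n : ℕ} (A : Matrix (Fin n) (Fin n) ℝ) (b : Fin n → ℝ) (c : ℝ) (x : Fin n → ℝ) : ℝ :=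
  (1 / 2 : ℝ) * (x ⬝ᵥ A.mulVec x) - b ⬝ᵥ x + c

/-- `A(σ) = A₀ + Σ σ_k A_k`. -/
def Amat {n m : ℕ} (A0 : Matrix (Fin n) (Fin n) ℝ) (A : Fin m → Matrix (Fin n) (Fin n) ℝ)
    (σ : Fin m → ℝ) : Matrix (Fin n) (Fin n) ℝ :=
  A0 + ∑ k, σ k • A k

/-- `b(σ) = b₀ + Σ σ_k b_k`. -/
def bvec {n m : ℕ} (b0 : Fin n → ℝ) (b : Fin m → Fin n → ℝ) (σ : Fin m → ℝ) : Fin n → ℝ :=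
  b0 + ∑ k, σ k • b k

/-- `q(x) = (q₁(x), …, q_m(x))`. -/
def qvec {n m : ℕ} (A : Fin m → Matrix (Fin n) (Fin n) ℝ) (b : Fin m → Fin n → ℝ)
    (c : Fin m → ℝ) (x : Fin n → ℝ) : Fin m → ℝ :=
  fun i => qf (A i) (b i) (c i) x

/-- Subdifferential of an (extended-real-valued) convex function represented by its
finite part `V` and its effective domain `dV`; it is empty outside `dV`. -/
def subdiff {m : ℕ} (V : (Fin m → ℝ) → ℝ) (dV : Set (Fin m → ℝ)) (y : Fin m → ℝ) :
    Set (Fin m → ℝ) :=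
  {σ | y ∈ dV ∧ ∀ y' ∈ dV, (y' - y) ⬝ᵥ σ ≤ V y' - V y}

/-- `V ∈ Γ(ℝᵐ)`: proper, convex and lower semicontinuous (closed epigraph), where the
extended-real-valued function is represented by its finite part `V` on its domain `dV`. -/
def properLscConvex {m : ℕ} (V : (Fin m → ℝ) → ℝ) (dV : Set (Fin m → ℝ)) : Prop :=
  dV.Nonempty ∧ ConvexOn ℝ dV V ∧
    IsClosed {p : (Fin m → ℝ) × ℝ | p.1 ∈ dV ∧ V p.1 ≤ p.2}

/-- `(Vs, dVs)` is the Fenchel conjugate of `(V, dV)`: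
`dVs` is the set where the supremum is finite and `Vs` its value there. -/
def isConjugate {m : ℕ} (V : (Fin m → ℝ) → ℝ) (dV : Set (Fin m → ℝ))
    (Vs : (Fin m → ℝ) → ℝ) (dVs : Set (Fin m → ℝ)) : Prop :=
  dVs = {σ | BddAbove ((fun y => y ⬝ᵥ σ - V y) '' dV)} ∧
    ∀ σ ∈ dVs, Vs σ = sSup ((fun y => y ⬝ᵥ σ - V y) '' dV)

/-- The continuous linear functional `v ↦ ⟨g, v⟩`. -/
def dotCLM {k : ℕ} (g : Fin k → ℝ) : (Fin k → ℝ) →L[ℝ] ℝ :=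
  LinearMap.toContinuousLinearMap
    { toFun := fun v => g ⬝ᵥ v
      map_add' := fun u v => by simp [dotProduct_add]
      map_smul' := fun t v => by simp [dotProduct_smul, smul_eq_mul] }

/-- The continuous linear map `v ↦ M v`. -/
def matCLM {k l : ℕ} (M : Matrix (Fin l) (Fin k) ℝ) : (Fin k → ℝ) →L[ℝ] (Fin l → ℝ) :=
  LinearMap.toContinuousLinearMap M.mulVecLin

/-- `V ∈ Γ_sc(ℝᵐ)`: a proper lsc convex function of Legendre type, i.e. essentially smooth
(differentiable on the nonempty interior of its domain, with gradient `gV`, and with empty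
subdifferential outside this interior) and essentially strictly convex. -/
def LegendreType {m : ℕ} (V : (Fin m → ℝ) → ℝ) (dV : Set (Fin m → ℝ))
    (gV : (Fin m → ℝ) → (Fin m → ℝ)) : Prop :=
  (interior dV).Nonempty ∧
  (∀ y ∈ interior dV, HasFDerivAt V (dotCLM (gV y)) y) ∧
  (∀ y, y ∉ interior dV → subdiff V dV y = ∅) ∧
  StrictConvexOn ℝ (interior dV) V

/-- The primal function `f = q₀ + V ∘ q`. -/
def fP {n m : ℕ} (A0 : Matrix (Fin n) (Fin n) ℝ) (b0 : Fin n → ℝ)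
    (A : Fin m → Matrix (Fin n) (Fin n) ℝ) (b : Fin m → Fin n → ℝ) (c : Fin m → ℝ)
    (V : (Fin m → ℝ) → ℝ) (x : Fin n → ℝ) : ℝ :=
  qf A0 b0 0 x + V (qvec A b c x)

/-- The gradient of the primal function `f` (valid on `X₀`):
`∇f(x) = A₀x − b₀ + Σ_i (∂V/∂y_i)(q(x)) (A_i x − b_i)`. -/
def gradfP {n m : ℕ} (A0 : Matrix (Fin n) (Fin n) ℝ) (b0 : Fin n → ℝ)
    (A : Fin m → Matrix (Fin n) (Fin n) ℝ) (b : Fin m → Fin n → ℝ) (c : Fin m → ℝ)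
    (gV : (Fin m → ℝ) → (Fin m → ℝ)) (x : Fin n → ℝ) : Fin n → ℝ :=
  A0 *ᵥ x - b0 + ∑ i, gV (qvec A b c x) i • ((A i) *ᵥ x - b i)

/-- `x(σ) = A(σ)⁻¹ b(σ)`. -/
def xofσ {n m : ℕ} (A0 : Matrix (Fin n) (Fin n) ℝ) (A : Fin m → Matrix (Fin n) (Fin n) ℝ)
    (b0 : Fin n → ℝ) (b : Fin m → Fin n → ℝ) (σ : Fin m → ℝ) : Fin n → ℝ :=
  (Amat A0 A σ)⁻¹ *ᵥ bvec b0 b σ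

/-- The dual function `D(σ) = Ξ(A(σ)⁻¹b(σ), σ)`. -/
def Dfun {n m : ℕ} (A0 : Matrix (Fin n) (Fin n) ℝ) (b0 : Fin n → ℝ)
    (A : Fin m → Matrix (Fin n) (Fin n) ℝ) (b : Fin m → Fin n → ℝ) (c : Fin m → ℝ)
    (Vs : (Fin m → ℝ) → ℝ) (σ : Fin m → ℝ) : ℝ :=
  qf A0 b0 0 (xofσ A0 A b0 b σ) + qvec A b c (xofσ A0 A b0 b σ) ⬝ᵥ σ - Vs σ

/-- The gradient of the dual function `D`: `∇D(σ) = q(x(σ)) − ∇V*(σ)`. -/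
def gradD {n m : ℕ} (A0 : Matrix (Fin n) (Fin n) ℝ) (b0 : Fin n → ℝ)
    (A : Fin m → Matrix (Fin n) (Fin n) ℝ) (b : Fin m → Fin n → ℝ) (c : Fin m → ℝ)
    (gVs : (Fin m → ℝ) → (Fin m → ℝ)) (σ : Fin m → ℝ) : Fin m → ℝ :=
  qvec A b c (xofσ A0 A b0 b σ) - gVs σ

/-- The matrix of the linear map `J : ℝᵐ → ℝⁿ`, `Jv = Σ_i v_i d_i`, whose columns are the
vectors `d_i = (E⁻¹)ᵀ(A_i x̄ − b_i)`. -/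
def Jmat {n m : ℕ} (A : Fin m → Matrix (Fin n) (Fin n) ℝ) (b : Fin m → Fin n → ℝ)
    (E : Matrix (Fin n) (Fin n) ℝ) (xb : Fin n → ℝ) : Matrix (Fin n) (Fin m) ℝ :=
  Matrix.of fun i k => ((E⁻¹)ᵀ *ᵥ ((A k) *ᵥ xb - b k)) i

/-- The matrix of `H = J ∘ Fᵀ : ℝᵐ → ℝⁿ`; its adjoint `H* = F ∘ Jᵀ` has matrix `Hᵀ`. -/
def Hmat {n m : ℕ} (A : Fin m → Matrix (Fin n) (Fin n) ℝ) (b : Fin m → Fin n → ℝ)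
    (E : Matrix (Fin n) (Fin n) ℝ) (F : Matrix (Fin m) (Fin m) ℝ) (xb : Fin n → ℝ) :
    Matrix (Fin n) (Fin m) ℝ :=
  Jmat A b E xb * Fᵀ

/-- `a` is a strict local maximizer of `f` on `s`. -/
def IsStrictLocalMaxOn {α : Type*} [TopologicalSpace α] (f : α → ℝ) (s : Set α) (a : α) :
    Prop :=
  ∃ U ∈ nhds a, ∀ x ∈ U ∩ s, x ≠ a → f x < f a

/-- `a` is a strict local minimizer of `f` on `s`. -/
def IsStrictLocalMinOn {α : Type*} [TopologicalSpace α] (f : α → ℝ) (s : Set α) (a : α) :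
    Prop :=
  ∃ U ∈ nhds a, ∀ x ∈ U ∩ s, x ≠ a → f a < f x

/-!
Near `x̄` the primal function `f` is differentiable with gradient `A(σ(x)) x − b(σ(x))`,
`σ(x) = ∇V(q x)`, which vanishes at `x̄`; its derivative there is the Hessian
`A(σ̄) + Gᵀ ∇²V(q x̄) G = −EᵀE + (FG)ᵀ(FG)`, `G` the Jacobian of `q` at `x̄`. In the coordinates
`w = E u` its quadratic form reads `−‖w‖² + ‖Hᵀ w‖²`, so the second-order necessary
(resp. sufficient) condition for a local maximum of `f` at `x̄` is `‖Hᵀ‖ = ‖H‖ ≤ 1`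
(resp. `< 1`).

The dual side reduces to the primal one through `Ξ`: by Fenchel–Young `Ξ(x, σ) ≤ f(x)`, with
equality exactly for `σ = ∇V(q x)`, and `Ξ(x, σ) ≤ D(σ)` on `S⁻` since `A(σ)⁻¹ b(σ)` maximizes the
concave quadratic `Ξ(·, σ)`. So a local maximum of `D` at `σ̄` forces `f(x) ≤ D(σ(x)) ≤ D(σ̄) = f(x̄)`,
and a strict local maximum of `f` at `x̄` gives `D(σ) ≤ f(x(σ)) < f(x̄)` with `x(σ) → x̄`.
-/

open Filter Topology Asymptotics

section SecondOrder

variable {E : Type*} [NormedAddCommGroup E] [NormedSpace ℝ E] {f : E → ℝ}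
  {f' : E → E →L[ℝ] ℝ} {B : E →L[ℝ] E →L[ℝ] ℝ} {a : E}

theorem isLittleO_taylor_two (hf : ∀ᶠ x in 𝓝 a, HasFDerivAt f (f' x) x)
    (hf' : HasFDerivAt f' B a) (ha : f' a = 0) :
    (fun h => f (a + h) - f a - B h h / 2) =o[𝓝 0] fun h => ‖h‖ ^ 2 := by
  refine isLittleO_iff.mpr fun ε hε => ?_
  have hlin := (hasFDerivAt_iff_isLittleO_nhds_zero.mp hf').def hε
  have hf0 : ∀ᶠ h in 𝓝 (0 : E), HasFDerivAt f (f' (a + h)) (a + h) :=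
    ((continuous_const_add a).tendsto' 0 a (add_zero a)).eventually hf
  obtain ⟨δ, hδ, hball⟩ := Metric.eventually_nhds_iff_ball.mp (hf0.and hlin)
  filter_upwards [Metric.ball_mem_nhds 0 hδ] with h hh
  have hseg : ∀ t ∈ Set.Icc (0 : ℝ) 1, t • h ∈ Metric.ball (0 : E) δ := fun t ht => by
    rw [mem_ball_zero_iff, norm_smul, Real.norm_of_nonneg ht.1]
    exact (mul_le_of_le_one_left (norm_nonneg h) ht.2).trans_lt (mem_ball_zero_iff.mp hh)
  have hderiv : ∀ t ∈ Set.Icc (0 : ℝ) 1, HasDerivWithinAt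
      (fun t : ℝ => f (a + t • h) - t ^ 2 * B h h / 2)
      ((f' (a + t • h) - B (t • h)) h) (Set.Icc 0 1) t := fun t ht => by
    have hline : HasDerivAt (fun t : ℝ => a + t • h) h t := by
      simpa using ((hasDerivAt_id t).smul_const h).const_add a
    have := ((hball _ (hseg t ht)).1.comp_hasDerivAt t hline).sub
      (((hasDerivAt_pow 2 t).mul_const (B h h)).div_const 2)
    refine this.hasDerivWithinAt.congr_deriv ?_
    simp only [_root_.sub_apply, map_smul, _root_.smul_apply, smul_eq_mul]
    norm_num
    ring
  have hbound : ∀ t ∈ Set.Ico (0 : ℝ) 1, ‖(f' (a + t • h) - B (t • h)) h‖ ≤ ε * ‖h‖ ^ 2 :=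
    fun t ht => by
      have h1 := (hball _ (hseg t (Set.Ico_subset_Icc_self ht))).2
      rw [ha, sub_zero, norm_smul, Real.norm_of_nonneg ht.1] at h1
      calc ‖(f' (a + t • h) - B (t • h)) h‖ ≤ ‖f' (a + t • h) - B (t • h)‖ * ‖h‖ :=
            ContinuousLinearMap.le_opNorm _ _
        _ ≤ ε * (t * ‖h‖) * ‖h‖ := by gcongr
        _ ≤ ε * ‖h‖ ^ 2 := by
            rw [pow_two, mul_assoc ε]
            gcongr
            exact mul_le_of_le_one_left (norm_nonneg h) ht.2.le
  have := norm_image_sub_le_of_norm_deriv_le_segment_01' hderiv hbound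
  simpa [sub_right_comm] using this

theorem IsLocalMax.hessian_nonpos (hmax : IsLocalMax f a)
    (hf : ∀ᶠ x in 𝓝 a, HasFDerivAt f (f' x) x) (hf' : HasFDerivAt f' B a) (h : E) :
    B h h ≤ 0 := by
  by_contra! hpos
  have hh : h ≠ 0 := by rintro rfl; simp at hpos
  have htaylor := (isLittleO_taylor_two hf hf' (hmax.hasFDerivAt_eq_zero hf.self_of_nhds)).def
    (show 0 < B h h / (4 * ‖h‖ ^ 2) by positivity)
  have hmax' : ∀ᶠ k in 𝓝 (0 : E), f (a + k) ≤ f a :=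
    ((continuous_const_add a).tendsto' 0 a (add_zero a)).eventually hmax
  have hline : Tendsto (fun t : ℝ => t • h) (𝓝[≠] 0) (𝓝 0) :=
    ((continuous_id.smul continuous_const).tendsto' 0 0 (zero_smul ℝ h)).mono_left
      nhdsWithin_le_nhds
  obtain ⟨t, ⟨hle, hfle⟩, ht⟩ :=
    ((hline.eventually (htaylor.and hmax')).and self_mem_nhdsWithin).exists
  have ht2 : 0 < t ^ 2 := by
    have : t ≠ 0 := ht
    positivity
  have hBt : B (t • h) (t • h) = t ^ 2 * B h h := by
    simp only [map_smul, _root_.smul_apply, smul_eq_mul]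
    ring
  have hnt : ‖‖t • h‖ ^ 2‖ = t ^ 2 * ‖h‖ ^ 2 := by
    rw [norm_pow, norm_norm, norm_smul, mul_pow, Real.norm_eq_abs, sq_abs]
  have hc : B h h / (4 * ‖h‖ ^ 2) * (t ^ 2 * ‖h‖ ^ 2) = t ^ 2 * B h h / 4 := by
    field_simp
  rw [hBt, hnt, hc, Real.norm_eq_abs] at hle
  linarith [(abs_le.mp hle).1, mul_pos ht2 hpos]

theorem exists_pos_hessian_le_neg_norm_sq [FiniteDimensional ℝ E]
    (hB : ∀ h ≠ 0, B h h < 0) : ∃ c > 0, ∀ h, B h h ≤ -(c * ‖h‖ ^ 2) := by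
  have hunit : ∀ h : E, h ≠ 0 → ‖h‖⁻¹ • h ∈ Metric.sphere (0 : E) 1 := fun h hh => by
    simp [norm_smul, hh]
  have hscale : ∀ h : E, B h h = ‖h‖ ^ 2 * B (‖h‖⁻¹ • h) (‖h‖⁻¹ • h) := fun h => by
    rcases eq_or_ne h 0 with rfl | hh
    · simp
    · simp only [map_smul, _root_.smul_apply, smul_eq_mul]
      field_simp
  rcases (Metric.sphere (0 : E) 1).eq_empty_or_nonempty with hempty | hne
  · refine ⟨1, one_pos, fun h => ?_⟩
    obtain rfl : h = 0 := by
      by_contra hh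
      simpa [hempty] using hunit h hh
    simp
  · obtain ⟨u₀, hu₀, hmax⟩ := (isCompact_sphere (0 : E) 1).exists_isMaxOn hne
      (show Continuous fun u => B u u by fun_prop).continuousOn
    refine ⟨-B u₀ u₀, neg_pos.mpr (hB _ (ne_zero_of_mem_sphere one_ne_zero ⟨u₀, hu₀⟩)), fun h => ?_⟩
    rcases eq_or_ne h 0 with rfl | hh
    · simp
    · have := mul_le_mul_of_nonneg_left (show B _ _ ≤ B u₀ u₀ from hmax (hunit h hh))
        (sq_nonneg ‖h‖)
      linarith [hscale h]

theorem eventually_lt_of_hessian_negDef [FiniteDimensional ℝ E]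
    (hf : ∀ᶠ x in 𝓝 a, HasFDerivAt f (f' x) x) (hf' : HasFDerivAt f' B a) (ha : f' a = 0)
    (hB : ∀ h ≠ 0, B h h < 0) : ∀ᶠ x in 𝓝 a, x ≠ a → f x < f a := by
  obtain ⟨c, hc, hBc⟩ := exists_pos_hessian_le_neg_norm_sq hB
  have htaylor := (isLittleO_taylor_two hf hf' ha).def (show 0 < c / 4 by positivity)
  have hsub : Tendsto (fun x => x - a) (𝓝 a) (𝓝 0) :=
    (continuous_sub_right a).tendsto' a 0 (sub_self a)
  filter_upwards [hsub.eventually htaylor] with x hx hxa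
  have hpos : 0 < ‖x - a‖ := norm_pos_iff.mpr (sub_ne_zero.mpr hxa)
  rw [add_sub_cancel, norm_pow, norm_norm, Real.norm_eq_abs] at hx
  have := (abs_le.mp hx).2
  nlinarith [hBc (x - a), mul_pos hc (pow_pos hpos 2)]

end SecondOrder

section DotProduct

variable {ι κ ν : Type*} [Fintype ι] [Fintype κ] [Fintype ν]

theorem dotProduct_self_nonneg (v : ι → ℝ) : 0 ≤ v ⬝ᵥ v :=
  Finset.sum_nonneg fun i _ => mul_self_nonneg (v i)

theorem dotProduct_self_pos {v : ι → ℝ} (hv : v ≠ 0) : 0 < v ⬝ᵥ v :=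
  (dotProduct_self_nonneg v).lt_of_ne (Ne.symm (dotProduct_self_eq_zero.not.mpr hv))

theorem sq_dotProduct_le (u v : ι → ℝ) : (u ⬝ᵥ v) ^ 2 ≤ (u ⬝ᵥ u) * (v ⬝ᵥ v) := by
  simpa [dotProduct, pow_two] using Finset.sum_mul_sq_le_sq_mul_sq Finset.univ u v

theorem dotProduct_transpose_mulVec_self (M : Matrix ι κ ℝ) (w : ι → ℝ) :
    (Mᵀ *ᵥ w) ⬝ᵥ (Mᵀ *ᵥ w) = w ⬝ᵥ M *ᵥ (Mᵀ *ᵥ w) := by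
  rw [dotProduct_mulVec w M, ← mulVec_transpose]

theorem transpose_mulVec_dotProduct_self_le {M : Matrix ι κ ℝ}
    (hM : ∀ v, (M *ᵥ v) ⬝ᵥ (M *ᵥ v) ≤ v ⬝ᵥ v) (w : ι → ℝ) :
    (Mᵀ *ᵥ w) ⬝ᵥ (Mᵀ *ᵥ w) ≤ w ⬝ᵥ w := by
  have hcs := sq_dotProduct_le w (M *ᵥ (Mᵀ *ᵥ w))
  rw [← dotProduct_transpose_mulVec_self] at hcs
  nlinarith [hM (Mᵀ *ᵥ w), dotProduct_self_nonneg w, dotProduct_self_nonneg (Mᵀ *ᵥ w)]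

theorem transpose_mulVec_dotProduct_self_lt {M : Matrix ι κ ℝ}
    (hM : ∀ v ≠ 0, (M *ᵥ v) ⬝ᵥ (M *ᵥ v) < v ⬝ᵥ v) {w : ι → ℝ} (hw : w ≠ 0) :
    (Mᵀ *ᵥ w) ⬝ᵥ (Mᵀ *ᵥ w) < w ⬝ᵥ w := by
  rcases eq_or_ne (Mᵀ *ᵥ w) 0 with h0 | h0
  · simpa [h0] using dotProduct_self_pos hw
  have hcs := sq_dotProduct_le w (M *ᵥ (Mᵀ *ᵥ w))
  rw [← dotProduct_transpose_mulVec_self] at hcs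
  nlinarith [hM _ h0, dotProduct_self_pos hw, dotProduct_self_pos h0]

theorem dotProduct_transpose_mul_self_mulVec (X : Matrix κ ι ℝ) (u : ι → ℝ) :
    u ⬝ᵥ (Xᵀ * X) *ᵥ u = (X *ᵥ u) ⬝ᵥ (X *ᵥ u) := by
  rw [← mulVec_mulVec, dotProduct_mulVec, ← mulVec_transpose, transpose_transpose]

theorem mulVec_dotProduct_self_lt_of_unit {M : Matrix κ ι ℝ}
    (hM : ∀ v, v ⬝ᵥ v = 1 → (M *ᵥ v) ⬝ᵥ (M *ᵥ v) < 1) {v : ι → ℝ} (hv : v ≠ 0) :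
    (M *ᵥ v) ⬝ᵥ (M *ᵥ v) < v ⬝ᵥ v := by
  set t := √(v ⬝ᵥ v)
  have ht : 0 < t := Real.sqrt_pos.mpr (dotProduct_self_pos hv)
  have htt : t * t = v ⬝ᵥ v := Real.mul_self_sqrt (dotProduct_self_nonneg v)
  have hunit := hM (t⁻¹ • v) (by
    simp only [smul_dotProduct, dotProduct_smul, smul_eq_mul, ← htt]
    field_simp)
  simp only [mulVec_smul, smul_dotProduct, dotProduct_smul, smul_eq_mul] at hunit
  field_simp at hunit
  rwa [← htt, ← pow_two]

variable [DecidableEq ι]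

theorem dotProduct_mulVec_neg_gram_add_gram {E : Matrix ι ι ℝ} (hE : IsUnit E.det)
    (F : Matrix ν κ ℝ) (G : Matrix κ ι ℝ) (u : ι → ℝ) :
    u ⬝ᵥ (-(Eᵀ * E) + Gᵀ * (Fᵀ * F) * G) *ᵥ u =
      -((E *ᵥ u) ⬝ᵥ (E *ᵥ u)) +
        ((F * G * E⁻¹) *ᵥ (E *ᵥ u)) ⬝ᵥ ((F * G * E⁻¹) *ᵥ (E *ᵥ u)) := by
  rw [mulVec_mulVec, Matrix.mul_assoc (F * G), nonsing_inv_mul E hE, Matrix.mul_one, add_mulVec,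
    dotProduct_add, neg_mulVec, dotProduct_neg, dotProduct_transpose_mul_self_mulVec,
    show Gᵀ * (Fᵀ * F) * G = (F * G)ᵀ * (F * G) by simp [transpose_mul, Matrix.mul_assoc],
    dotProduct_transpose_mul_self_mulVec]

theorem transpose_contraction_of_neg_gram_add_gram_nonpos {E : Matrix ι ι ℝ}
    (hE : IsUnit E.det) {F : Matrix ν κ ℝ} {G : Matrix κ ι ℝ}
    (hQ : ∀ u, u ⬝ᵥ (-(Eᵀ * E) + Gᵀ * (Fᵀ * F) * G) *ᵥ u ≤ 0) (v : ν → ℝ) :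
    ((F * G * E⁻¹)ᵀ *ᵥ v) ⬝ᵥ ((F * G * E⁻¹)ᵀ *ᵥ v) ≤ v ⬝ᵥ v := by
  refine transpose_mulVec_dotProduct_self_le (fun w => ?_) v
  have := hQ (E⁻¹ *ᵥ w)
  rwa [dotProduct_mulVec_neg_gram_add_gram hE, mulVec_mulVec, mul_nonsing_inv E hE,
    one_mulVec, neg_add_nonpos_iff] at this

theorem neg_gram_add_gram_negDef_of_transpose_contraction {E : Matrix ι ι ℝ}
    (hE : IsUnit E.det) {F : Matrix ν κ ℝ} {G : Matrix κ ι ℝ}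
    (hH : ∀ v ≠ 0, ((F * G * E⁻¹)ᵀ *ᵥ v) ⬝ᵥ ((F * G * E⁻¹)ᵀ *ᵥ v) < v ⬝ᵥ v)
    {u : ι → ℝ} (hu : u ≠ 0) :
    u ⬝ᵥ (-(Eᵀ * E) + Gᵀ * (Fᵀ * F) * G) *ᵥ u < 0 := by
  have hEu : E *ᵥ u ≠ 0 := fun h0 => hu <| by
    simpa [mulVec_mulVec, nonsing_inv_mul E hE] using congrArg (E⁻¹ *ᵥ ·) h0
  have := transpose_mulVec_dotProduct_self_lt hH hEu
  rw [transpose_transpose] at this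
  rw [dotProduct_mulVec_neg_gram_add_gram hE]
  linarith

end DotProduct

def dotProductCLM (k : ℕ) : (Fin k → ℝ) →L[ℝ] (Fin k → ℝ) →L[ℝ] ℝ :=
  (dotProductBilin ℝ ℝ).toContinuousBilinearMap

@[simp] theorem dotProductCLM_apply {k : ℕ} (g : Fin k → ℝ) : dotProductCLM k g = dotCLM g :=
  rfl

@[simp] theorem dotCLM_apply {k : ℕ} (g v : Fin k → ℝ) : dotCLM g v = g ⬝ᵥ v := rfl

@[simp] theorem matCLM_apply {k l : ℕ} (M : Matrix (Fin l) (Fin k) ℝ) (v : Fin k → ℝ) :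
    matCLM M v = M *ᵥ v := rfl

theorem ConvexOn.add_fderiv_sub_le {E : Type*} [NormedAddCommGroup E] [NormedSpace ℝ E]
    {s : Set E} {V : E → ℝ} {V' : E →L[ℝ] ℝ} {y y' : E} (hV : ConvexOn ℝ s V) (hy : y ∈ s)
    (hy' : y' ∈ s) (hd : HasFDerivAt V V' y) : V y + V' (y' - y) ≤ V y' := by
  have hline := hV.comp_affineMap (AffineMap.lineMap (k := ℝ) y y')
  have hderiv : HasDerivAt (V ∘ AffineMap.lineMap (k := ℝ) y y') (V' (y' - y)) 0 := by
    refine HasFDerivAt.comp_hasDerivAt (0 : ℝ) ?_ AffineMap.hasDerivAt_lineMap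
    simpa using hd
  have := hline.le_slope_of_hasDerivAt (by simpa using hy) (by simpa using hy') zero_lt_one hderiv
  simp only [slope_def_field, Function.comp_apply, AffineMap.lineMap_apply_zero,
    AffineMap.lineMap_apply_one, sub_zero, div_one] at this
  linarith

section ConvexConjugate

variable {m : ℕ} {V Vs : (Fin m → ℝ) → ℝ} {dV dVs : Set (Fin m → ℝ)}

theorem isConjugate.dotProduct_sub_le (hconj : isConjugate V dV Vs dVs) {y σ : Fin m → ℝ}
    (hy : y ∈ dV) (hσ : σ ∈ dVs) : y ⬝ᵥ σ - V y ≤ Vs σ := by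
  rw [hconj.2 σ hσ]
  exact le_csSup (hconj.1.le hσ) ⟨y, hy, rfl⟩

theorem isConjugate.mem_and_eq_of_hasFDerivAt (hconj : isConjugate V dV Vs dVs)
    (hV : ConvexOn ℝ dV V) {y s : Fin m → ℝ} (hy : y ∈ dV) (hd : HasFDerivAt V (dotCLM s) y) :
    s ∈ dVs ∧ Vs s = y ⬝ᵥ s - V y := by
  have hub : ∀ z ∈ (fun y' => y' ⬝ᵥ s - V y') '' dV, z ≤ y ⬝ᵥ s - V y := by
    rintro _ ⟨y', hy', rfl⟩
    have := hV.add_fderiv_sub_le hy hy' hd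
    rw [dotCLM_apply, dotProduct_sub, dotProduct_comm s, dotProduct_comm s] at this
    show y' ⬝ᵥ s - V y' ≤ y ⬝ᵥ s - V y
    linarith
  have hs : s ∈ dVs := hconj.1.ge ⟨_, hub⟩
  refine ⟨hs, (hconj.2 s hs).trans (le_antisymm (csSup_le ⟨_, y, hy, rfl⟩ hub) ?_)⟩
  exact le_csSup ⟨_, hub⟩ ⟨y, hy, rfl⟩

theorem isConjugate.dotProduct_sub_lt (hconj : isConjugate V dV Vs dVs) {y s σ : Fin m → ℝ}
    (hy : y ∈ interior dV) (hd : HasFDerivAt V (dotCLM s) y) (hσ : σ ∈ dVs) (hne : σ ≠ s) :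
    y ⬝ᵥ σ - V y < Vs σ := by
  refine (hconj.dotProduct_sub_le (interior_subset hy) hσ).lt_of_ne fun heq => hne ?_
  -- equality in Fenchel–Young makes `y` a minimizer of `V - ⟨·, σ⟩`, whose derivative must vanish
  have hmin : IsLocalMin (fun y' => V y' - dotCLM σ y') y :=
    Filter.mem_of_superset (mem_interior_iff_mem_nhds.mp hy) fun y' hy' => by
      have := hconj.dotProduct_sub_le hy' hσ
      show V y - σ ⬝ᵥ y ≤ V y' - σ ⬝ᵥ y'
      rw [dotProduct_comm σ, dotProduct_comm σ]
      linarith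
  have h0 := hmin.hasFDerivAt_eq_zero (hd.sub (dotCLM σ).hasFDerivAt)
  ext i
  exact (sub_eq_zero.mp (by simpa using congrArg (fun L => L (Pi.single i 1)) h0)).symm

end ConvexConjugate

theorem Matrix.PosDef.eventually {X ι : Type*} [TopologicalSpace X] [Fintype ι]
    {M : X → Matrix ι ι ℝ} (hM : Continuous M) (hherm : ∀ x, (M x).IsHermitian) {x₀ : X}
    (h₀ : (M x₀).PosDef) : ∀ᶠ x in 𝓝 x₀, (M x).PosDef := by
  have hquad : Continuous fun p : X × (ι → ℝ) => p.2 ⬝ᵥ M p.1 *ᵥ p.2 := by fun_prop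
  have hsphere : ∀ᶠ x in 𝓝 x₀, ∀ u ∈ Metric.sphere (0 : ι → ℝ) 1, 0 < u ⬝ᵥ M x *ᵥ u :=
    (isCompact_sphere 0 1).eventually_forall_of_forall_eventually fun u hu =>
      continuousAt_const.eventually_lt hquad.continuousAt
        (by simpa using h₀.dotProduct_mulVec_pos (ne_zero_of_mem_sphere one_ne_zero ⟨u, hu⟩))
  filter_upwards [hsphere] with x hx
  refine .of_dotProduct_mulVec_pos (hherm x) fun v hv => ?_
  have hunit : ‖v‖⁻¹ • v ∈ Metric.sphere (0 : ι → ℝ) 1 := by simp [norm_smul, hv]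
  have := hx _ hunit
  simp only [mulVec_smul, dotProduct_smul, smul_dotProduct, smul_eq_mul] at this
  simpa using pos_of_mul_pos_right (pos_of_mul_pos_right this (by positivity)) (by positivity)

section Calculus

variable {n m : ℕ}

theorem hasFDerivAt_qf {A : Matrix (Fin n) (Fin n) ℝ} (hA : A.IsSymm) (b : Fin n → ℝ) (c : ℝ)
    (x : Fin n → ℝ) : HasFDerivAt (qf A b c) (dotCLM (A *ᵥ x - b)) x := by
  have hquad := (dotProductCLM n).hasFDerivAt_of_bilinear (hasFDerivAt_id x)
    (matCLM A).hasFDerivAt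
  refine (((hquad.const_mul (1 / 2)).sub (dotCLM b).hasFDerivAt).add_const c).congr_fderiv ?_
  ext v
  have hsymm : x ⬝ᵥ A *ᵥ v = (A *ᵥ x) ⬝ᵥ v := by
    rw [dotProduct_mulVec, ← mulVec_transpose, hA.eq]
  simp only [one_div, id_eq, ContinuousLinearMap.precompR_apply, dotProductCLM_apply,
    ContinuousLinearMap.compL_apply, matCLM_apply, smul_add, _root_.sub_apply, _root_.add_apply,
    _root_.smul_apply, ContinuousLinearMap.comp_apply, dotCLM_apply, hsymm, smul_eq_mul,
    ContinuousLinearMap.precompL_apply, ContinuousLinearMap.id_apply, dotProduct_comm v,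
    sub_dotProduct, sub_left_inj]
  ring

def qvecJac (A : Fin m → Matrix (Fin n) (Fin n) ℝ) (b : Fin m → Fin n → ℝ) (x : Fin n → ℝ) :
    Matrix (Fin m) (Fin n) ℝ :=
  Matrix.of fun i => A i *ᵥ x - b i

theorem qvecJac_transpose_mulVec (A : Fin m → Matrix (Fin n) (Fin n) ℝ)
    (b : Fin m → Fin n → ℝ) (x : Fin n → ℝ) (σ : Fin m → ℝ) :
    (qvecJac A b x)ᵀ *ᵥ σ = ∑ i, σ i • (A i *ᵥ x - b i) := by
  ext j
  simp [qvecJac, mulVec, dotProduct, Finset.sum_apply, mul_comm]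

theorem hasFDerivAt_qvec {A : Fin m → Matrix (Fin n) (Fin n) ℝ} (hA : ∀ i, (A i).IsSymm)
    (b : Fin m → Fin n → ℝ) (c : Fin m → ℝ) (x : Fin n → ℝ) :
    HasFDerivAt (qvec A b c) (matCLM (qvecJac A b x)) x :=
  hasFDerivAt_pi'.mpr fun i => hasFDerivAt_qf (hA i) (b i) (c i) x

theorem continuous_qvec {A : Fin m → Matrix (Fin n) (Fin n) ℝ} (hA : ∀ i, (A i).IsSymm)
    (b : Fin m → Fin n → ℝ) (c : Fin m → ℝ) : Continuous (qvec A b c) :=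
  continuous_iff_continuousAt.mpr fun x => (hasFDerivAt_qvec hA b c x).continuousAt

theorem gradfP_eq {A0 : Matrix (Fin n) (Fin n) ℝ} {b0 : Fin n → ℝ}
    {A : Fin m → Matrix (Fin n) (Fin n) ℝ} {b : Fin m → Fin n → ℝ} {c : Fin m → ℝ}
    {gV : (Fin m → ℝ) → (Fin m → ℝ)} (x : Fin n → ℝ) :
    gradfP A0 b0 A b c gV x =
      Amat A0 A (gV (qvec A b c x)) *ᵥ x - bvec b0 b (gV (qvec A b c x)) := by
  simp only [gradfP, Amat, bvec, add_mulVec, sum_mulVec, smul_mulVec, smul_sub,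
    Finset.sum_sub_distrib]
  abel

theorem hasFDerivAt_fP {A0 : Matrix (Fin n) (Fin n) ℝ} (hA0 : A0.IsSymm) (b0 : Fin n → ℝ)
    {A : Fin m → Matrix (Fin n) (Fin n) ℝ} (hA : ∀ i, (A i).IsSymm) (b : Fin m → Fin n → ℝ)
    (c : Fin m → ℝ) {V : (Fin m → ℝ) → ℝ} {gV : (Fin m → ℝ) → (Fin m → ℝ)} {x : Fin n → ℝ}
    (hV : HasFDerivAt V (dotCLM (gV (qvec A b c x))) (qvec A b c x)) :
    HasFDerivAt (fP A0 b0 A b c V) (dotCLM (gradfP A0 b0 A b c gV x)) x := by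
  refine ((hasFDerivAt_qf hA0 b0 0 x).add (hV.comp x (hasFDerivAt_qvec hA b c x))).congr_fderiv ?_
  ext v
  simp [gradfP, ← qvecJac_transpose_mulVec, add_dotProduct, dotProduct_mulVec,
    mulVec_transpose]

theorem hasFDerivAt_gradfP (A0 : Matrix (Fin n) (Fin n) ℝ) (b0 : Fin n → ℝ)
    {A : Fin m → Matrix (Fin n) (Fin n) ℝ} (hA : ∀ i, (A i).IsSymm) (b : Fin m → Fin n → ℝ)
    (c : Fin m → ℝ) {gV : (Fin m → ℝ) → (Fin m → ℝ)} {M : Matrix (Fin m) (Fin m) ℝ}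
    {x : Fin n → ℝ} (hgV : HasFDerivAt gV (matCLM M) (qvec A b c x)) :
    HasFDerivAt (gradfP A0 b0 A b c gV)
      (matCLM (Amat A0 A (gV (qvec A b c x)) + (qvecJac A b x)ᵀ * M * qvecJac A b x)) x := by
  have hσ := hasFDerivAt_pi'.mp (hgV.comp x (hasFDerivAt_qvec hA b c x))
  have hterm := fun i => (hσ i).smul (((matCLM (A i)).hasFDerivAt (x := x)).sub_const (b i))
  refine (((matCLM A0).hasFDerivAt.sub_const b0).add
    (HasFDerivAt.fun_sum fun i _ => hterm i)).congr_fderiv ?_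
  ext v : 1
  simp [Amat, add_mulVec, sum_mulVec, smul_mulVec, ← mulVec_mulVec, qvecJac_transpose_mulVec,
    Finset.sum_add_distrib, add_assoc]

end Calculus

section PrimalSecondOrder

variable {n m : ℕ} {A0 : Matrix (Fin n) (Fin n) ℝ} {b0 : Fin n → ℝ}
  {A : Fin m → Matrix (Fin n) (Fin n) ℝ} {b : Fin m → Fin n → ℝ} {c : Fin m → ℝ}
  {V : (Fin m → ℝ) → ℝ} {dV : Set (Fin m → ℝ)} {gV : (Fin m → ℝ) → (Fin m → ℝ)}
  {M : Matrix (Fin m) (Fin m) ℝ} {xb : Fin n → ℝ}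

theorem eventually_hasFDerivAt_fP (hA0 : A0.IsSymm) (hA : ∀ i, (A i).IsSymm)
    (hVd : ∀ y ∈ interior dV, HasFDerivAt V (dotCLM (gV y)) y)
    (hX0 : qvec A b c xb ∈ interior dV) :
    ∀ᶠ x in 𝓝 xb, HasFDerivAt (fP A0 b0 A b c V) (dotCLM (gradfP A0 b0 A b c gV x)) x :=
  (continuous_qvec hA b c).continuousAt.eventually (isOpen_interior.mem_nhds hX0) |>.mono
    fun _ hx => hasFDerivAt_fP hA0 b0 hA b c (hVd _ hx)

theorem IsLocalMax.fP_hessian_nonpos (hA0 : A0.IsSymm) (hA : ∀ i, (A i).IsSymm)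
    (hVd : ∀ y ∈ interior dV, HasFDerivAt V (dotCLM (gV y)) y)
    (hX0 : qvec A b c xb ∈ interior dV) (hM : HasFDerivAt gV (matCLM M) (qvec A b c xb))
    (hmax : IsLocalMax (fP A0 b0 A b c V) xb) (u : Fin n → ℝ) :
    u ⬝ᵥ (Amat A0 A (gV (qvec A b c xb)) + (qvecJac A b xb)ᵀ * M * qvecJac A b xb) *ᵥ u ≤ 0 := by
  simpa [dotProduct_comm u] using hmax.hessian_nonpos (eventually_hasFDerivAt_fP hA0 hA hVd hX0)
    ((dotProductCLM n).hasFDerivAt.comp xb (hasFDerivAt_gradfP A0 b0 hA b c hM)) u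

theorem eventually_fP_lt (hA0 : A0.IsSymm) (hA : ∀ i, (A i).IsSymm)
    (hVd : ∀ y ∈ interior dV, HasFDerivAt V (dotCLM (gV y)) y)
    (hX0 : qvec A b c xb ∈ interior dV) (hM : HasFDerivAt gV (matCLM M) (qvec A b c xb))
    (hcrit : Amat A0 A (gV (qvec A b c xb)) *ᵥ xb = bvec b0 b (gV (qvec A b c xb)))
    (hneg : ∀ u ≠ 0,
      u ⬝ᵥ (Amat A0 A (gV (qvec A b c xb)) + (qvecJac A b xb)ᵀ * M * qvecJac A b xb) *ᵥ u < 0) :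
    ∀ᶠ x in 𝓝 xb, x ≠ xb → fP A0 b0 A b c V x < fP A0 b0 A b c V xb := by
  refine eventually_lt_of_hessian_negDef (eventually_hasFDerivAt_fP hA0 hA hVd hX0)
    ((dotProductCLM n).hasFDerivAt.comp xb (hasFDerivAt_gradfP A0 b0 hA b c hM)) ?_
    fun u hu => by simpa [dotProduct_comm u] using hneg u hu
  rw [gradfP_eq, hcrit, sub_self]
  ext
  simp

end PrimalSecondOrder

section DualFunction

variable {n m : ℕ}

def Ξ (A0 : Matrix (Fin n) (Fin n) ℝ) (b0 : Fin n → ℝ) (A : Fin m → Matrix (Fin n) (Fin n) ℝ)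
    (b : Fin m → Fin n → ℝ) (c : Fin m → ℝ) (Vs : (Fin m → ℝ) → ℝ) (x : Fin n → ℝ)
    (σ : Fin m → ℝ) : ℝ :=
  qf A0 b0 0 x + qvec A b c x ⬝ᵥ σ - Vs σ

theorem qf_Amat_bvec (A0 : Matrix (Fin n) (Fin n) ℝ) (b0 : Fin n → ℝ)
    (A : Fin m → Matrix (Fin n) (Fin n) ℝ) (b : Fin m → Fin n → ℝ) (c : Fin m → ℝ)
    (σ : Fin m → ℝ) (x : Fin n → ℝ) :
    qf (Amat A0 A σ) (bvec b0 b σ) (c ⬝ᵥ σ) x = qf A0 b0 0 x + qvec A b c x ⬝ᵥ σ := by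
  rw [dotProduct_comm c, dotProduct_comm (qvec A b c x),
    show σ ⬝ᵥ qvec A b c x = ∑ i, σ i * qf (A i) (b i) (c i) x from rfl,
    show σ ⬝ᵥ c = ∑ i, σ i * c i from rfl]
  simp only [qf, Amat, bvec, add_mulVec, sum_mulVec, smul_mulVec, dotProduct_add, dotProduct_sum,
    dotProduct_smul, add_dotProduct, sum_dotProduct, smul_dotProduct, smul_eq_mul, mul_add,
    mul_sub, Finset.sum_add_distrib, Finset.sum_sub_distrib, Finset.mul_sum, mul_left_comm _ (σ _)]
  ring

theorem Amat_isSymm {A0 : Matrix (Fin n) (Fin n) ℝ} {A : Fin m → Matrix (Fin n) (Fin n) ℝ}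
    (hA0 : A0.IsSymm) (hA : ∀ i, (A i).IsSymm) (σ : Fin m → ℝ) : (Amat A0 A σ).IsSymm := by
  simp [IsSymm, Amat, transpose_sum, hA0.eq, fun k => (hA k).eq]

theorem continuous_Amat (A0 : Matrix (Fin n) (Fin n) ℝ) (A : Fin m → Matrix (Fin n) (Fin n) ℝ) :
    Continuous (Amat A0 A) := by
  unfold Amat
  fun_prop

theorem continuous_bvec (b0 : Fin n → ℝ) (b : Fin m → Fin n → ℝ) : Continuous (bvec b0 b) := by
  unfold bvec
  fun_prop

theorem isUnit_det_of_posDef_neg {ι : Type*} [Fintype ι] [DecidableEq ι] {M : Matrix ι ι ℝ}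
    (hM : (-M).PosDef) :
    IsUnit M.det :=
  (isUnit_iff_isUnit_det M).mp (by simpa using hM.isUnit.neg)

theorem qf_le_qf_of_mulVec_eq {M : Matrix (Fin n) (Fin n) ℝ} (hM : (-M).PosDef)
    {β x₀ : Fin n → ℝ} (hx₀ : M *ᵥ x₀ = β) (γ : ℝ) (x : Fin n → ℝ) : qf M β γ x ≤ qf M β γ x₀ := by
  have hMt : Mᵀ = M := by simpa using hM.isHermitian.eq
  have hsymm : x ⬝ᵥ M *ᵥ x₀ = x₀ ⬝ᵥ M *ᵥ x := by
    rw [dotProduct_mulVec, ← mulVec_transpose, hMt, dotProduct_comm]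
  have hnonneg := hM.posSemidef.dotProduct_mulVec_nonneg (x - x₀)
  simp only [star_trivial, neg_mulVec, dotProduct_neg, mulVec_sub, sub_dotProduct,
    dotProduct_sub] at hnonneg
  simp only [qf, ← hx₀, dotProduct_comm (M *ᵥ x₀)]
  linarith

variable {A0 : Matrix (Fin n) (Fin n) ℝ} {A : Fin m → Matrix (Fin n) (Fin n) ℝ}
  {b0 : Fin n → ℝ} {b : Fin m → Fin n → ℝ} {σ : Fin m → ℝ}

theorem mulVec_xofσ (h : IsUnit (Amat A0 A σ).det) :
    Amat A0 A σ *ᵥ xofσ A0 A b0 b σ = bvec b0 b σ := by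
  rw [xofσ, mulVec_mulVec, mul_nonsing_inv _ h, one_mulVec]

theorem xofσ_eq {x : Fin n → ℝ} (h : IsUnit (Amat A0 A σ).det)
    (hx : Amat A0 A σ *ᵥ x = bvec b0 b σ) : xofσ A0 A b0 b σ = x := by
  rw [xofσ, ← hx, mulVec_mulVec, nonsing_inv_mul _ h, one_mulVec]

theorem continuousAt_xofσ (h : IsUnit (Amat A0 A σ).det) : ContinuousAt (xofσ A0 A b0 b) σ := by
  have hinv : ContinuousAt (fun σ => (Amat A0 A σ)⁻¹) σ :=
    (continuousAt_matrix_inv _ (by rw [Ring.inverse_eq_inv']; exact continuousAt_inv₀ h.ne_zero)).comp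
      (continuous_Amat A0 A).continuousAt
  exact (continuous_fst.matrix_mulVec continuous_snd).continuousAt.comp
    (hinv.prodMk (continuous_bvec b0 b).continuousAt)

theorem Ξ_le_Dfun (c : Fin m → ℝ) (Vs : (Fin m → ℝ) → ℝ) (hneg : (-(Amat A0 A σ)).PosDef)
    (x : Fin n → ℝ) : Ξ A0 b0 A b c Vs x σ ≤ Dfun A0 b0 A b c Vs σ := by
  have := qf_le_qf_of_mulVec_eq hneg
    (mulVec_xofσ (b0 := b0) (b := b) (isUnit_det_of_posDef_neg hneg)) (c ⬝ᵥ σ) x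
  rw [qf_Amat_bvec, qf_Amat_bvec] at this
  simp only [Ξ, Dfun]
  linarith

end DualFunction

section PrimalDual

variable {n m : ℕ} {A0 : Matrix (Fin n) (Fin n) ℝ} {b0 : Fin n → ℝ}
  {A : Fin m → Matrix (Fin n) (Fin n) ℝ} {b : Fin m → Fin n → ℝ} {c : Fin m → ℝ}
  {V Vs : (Fin m → ℝ) → ℝ} {dV dVs : Set (Fin m → ℝ)} {gV : (Fin m → ℝ) → (Fin m → ℝ)}
  {x xb : Fin n → ℝ} {σ σb : Fin m → ℝ}

theorem Ξ_le_fP (hconj : isConjugate V dV Vs dVs) (hx : qvec A b c x ∈ dV) (hσ : σ ∈ dVs) :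
    Ξ A0 b0 A b c Vs x σ ≤ fP A0 b0 A b c V x := by
  have := hconj.dotProduct_sub_le hx hσ
  simp only [Ξ, fP]
  linarith

theorem Ξ_lt_fP (hconj : isConjugate V dV Vs dVs) (hx : qvec A b c x ∈ interior dV)
    (hd : HasFDerivAt V (dotCLM (gV (qvec A b c x))) (qvec A b c x)) (hσ : σ ∈ dVs)
    (hne : σ ≠ gV (qvec A b c x)) : Ξ A0 b0 A b c Vs x σ < fP A0 b0 A b c V x := by
  have := hconj.dotProduct_sub_lt hx hd hσ hne
  simp only [Ξ, fP]
  linarith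

theorem fP_eq_Ξ (hconj : isConjugate V dV Vs dVs) (hV : ConvexOn ℝ dV V)
    (hx : qvec A b c x ∈ dV) (hd : HasFDerivAt V (dotCLM (gV (qvec A b c x))) (qvec A b c x)) :
    gV (qvec A b c x) ∈ dVs ∧ fP A0 b0 A b c V x = Ξ A0 b0 A b c Vs x (gV (qvec A b c x)) := by
  obtain ⟨hmem, heq⟩ := hconj.mem_and_eq_of_hasFDerivAt hV hx hd
  refine ⟨hmem, ?_⟩
  simp only [Ξ, fP, heq]
  ring

theorem Dfun_eq_fP (hconj : isConjugate V dV Vs dVs) (hV : ConvexOn ℝ dV V)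
    (hX : qvec A b c xb ∈ dV) (hd : HasFDerivAt V (dotCLM (gV (qvec A b c xb))) (qvec A b c xb))
    (hdet : IsUnit (Amat A0 A σb).det) (hcrit1 : Amat A0 A σb *ᵥ xb = bvec b0 b σb)
    (hcrit2 : σb = gV (qvec A b c xb)) :
    Dfun A0 b0 A b c Vs σb = fP A0 b0 A b c V xb := by
  rw [(fP_eq_Ξ hconj hV hX hd).2, ← hcrit2, ← xofσ_eq hdet hcrit1]
  rfl

theorem isLocalMax_fP_of_isLocalMaxOn_Dfun (hA0 : A0.IsSymm) (hA : ∀ i, (A i).IsSymm)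
    (hconj : isConjugate V dV Vs dVs) (hV : ConvexOn ℝ dV V)
    (hVd : ∀ y ∈ interior dV, HasFDerivAt V (dotCLM (gV y)) y)
    (hX0 : qvec A b c xb ∈ interior dV) (hgV : ContinuousAt gV (qvec A b c xb))
    (hcrit2 : σb = gV (qvec A b c xb)) (hSneg : (-(Amat A0 A σb)).PosDef)
    (hDf : Dfun A0 b0 A b c Vs σb = fP A0 b0 A b c V xb)
    (hmax : IsLocalMaxOn (Dfun A0 b0 A b c Vs) {σ | σ ∈ dVs ∧ (-(Amat A0 A σ)).PosDef} σb) :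
    IsLocalMax (fP A0 b0 A b c V) xb := by
  have hq := (continuous_qvec hA b c).continuousAt (x := xb)
  have hσ : Tendsto (fun x => gV (qvec A b c x)) (𝓝 xb) (𝓝 σb) := hcrit2 ▸ hgV.comp hq
  have hneg : ∀ᶠ σ in 𝓝 σb, (-(Amat A0 A σ)).PosDef :=
    Matrix.PosDef.eventually (continuous_Amat A0 A).neg
      (fun σ => isHermitian_iff_isSymm.mpr (Amat_isSymm hA0 hA σ).neg) hSneg
  filter_upwards [hσ.eventually (eventually_nhdsWithin_iff.mp hmax), hσ.eventually hneg,
    hq.eventually (isOpen_interior.mem_nhds hX0)] with x hDle hnegx hx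
  obtain ⟨hmem, hfx⟩ := fP_eq_Ξ (A0 := A0) (b0 := b0) hconj hV (interior_subset hx) (hVd _ hx)
  calc fP A0 b0 A b c V x = Ξ A0 b0 A b c Vs x (gV (qvec A b c x)) := hfx
    _ ≤ Dfun A0 b0 A b c Vs (gV (qvec A b c x)) := Ξ_le_Dfun c Vs hnegx x
    _ ≤ Dfun A0 b0 A b c Vs σb := hDle ⟨hmem, hnegx⟩
    _ = fP A0 b0 A b c V xb := hDf

theorem isStrictLocalMaxOn_Dfun (hA : ∀ i, (A i).IsSymm) (hconj : isConjugate V dV Vs dVs)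
    (hX0 : qvec A b c xb ∈ interior dV)
    (hd : HasFDerivAt V (dotCLM (gV (qvec A b c xb))) (qvec A b c xb))
    (hdet : IsUnit (Amat A0 A σb).det) (hcrit1 : Amat A0 A σb *ᵥ xb = bvec b0 b σb)
    (hcrit2 : σb = gV (qvec A b c xb)) (hDf : Dfun A0 b0 A b c Vs σb = fP A0 b0 A b c V xb)
    (hstrict : ∀ᶠ x in 𝓝 xb, x ≠ xb → fP A0 b0 A b c V x < fP A0 b0 A b c V xb)
    (S : Set (Fin m → ℝ)) (hS : S ⊆ dVs) : IsStrictLocalMaxOn (Dfun A0 b0 A b c Vs) S σb := by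
  have hxσ : Tendsto (xofσ A0 A b0 b) (𝓝 σb) (𝓝 xb) :=
    xofσ_eq hdet hcrit1 ▸ continuousAt_xofσ hdet
  have hint := (continuous_qvec hA b c).continuousAt.eventually (isOpen_interior.mem_nhds hX0)
  refine ⟨_, hxσ.eventually (hstrict.and hint), fun σ ⟨⟨hlt, hx⟩, hσS⟩ hne => ?_⟩
  rw [hDf]
  by_cases hxx : xofσ A0 A b0 b σ = xb
  · -- `x(σ) = x̄` while `σ ≠ ∇V(q x̄)`: Fenchel–Young is strict
    have := Ξ_lt_fP (A0 := A0) (b0 := b0) hconj hX0 hd (hS hσS) (hcrit2 ▸ hne)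
    rw [← hxx] at this ⊢
    exact this
  · exact (Ξ_le_fP hconj (interior_subset hx) (hS hσS)).trans_lt (hlt hxx)

end PrimalDual

theorem Hmat_eq {n m : ℕ} (A : Fin m → Matrix (Fin n) (Fin n) ℝ) (b : Fin m → Fin n → ℝ)
    (E : Matrix (Fin n) (Fin n) ℝ) (F : Matrix (Fin m) (Fin m) ℝ) (xb : Fin n → ℝ) :
    Hmat A b E F xb = (F * qvecJac A b xb * E⁻¹)ᵀ := by
  have hJ : Jmat A b E xb = (E⁻¹)ᵀ * (qvecJac A b xb)ᵀ := by
    ext i k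
    simp [Jmat, qvecJac, mul_apply, mulVec, dotProduct]
  simp [Hmat, hJ, transpose_mul, Matrix.mul_assoc]

theorem statement14_general {n m : ℕ}
    (A0 : Matrix (Fin n) (Fin n) ℝ) (A : Fin m → Matrix (Fin n) (Fin n) ℝ)
    (b0 : Fin n → ℝ) (b : Fin m → Fin n → ℝ) (c : Fin m → ℝ)
    (hA0 : A0.IsSymm) (hA : ∀ i, (A i).IsSymm)
    (V Vs : (Fin m → ℝ) → ℝ) (dV dVs : Set (Fin m → ℝ))
    (gV : (Fin m → ℝ) → (Fin m → ℝ)) (MV : (Fin m → ℝ) → Matrix (Fin m) (Fin m) ℝ)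
    (hV : properLscConvex V dV) (hLeg : LegendreType V dV gV)
    (hMV : ∀ y ∈ interior dV, HasFDerivAt gV (matCLM (MV y)) y)
    (hconj : isConjugate V dV Vs dVs)
    (xb : Fin n → ℝ) (σb : Fin m → ℝ)
    (hX0 : qvec A b c xb ∈ interior dV)
    (hSneg : (-(Amat A0 A σb)).PosDef)
    (hcrit1 : Amat A0 A σb *ᵥ xb = bvec b0 b σb)
    (hcrit2 : σb = gV (qvec A b c xb))
    (E : Matrix (Fin n) (Fin n) ℝ) (hE : IsUnit E.det)
    (hEA : Eᵀ * E = -(Amat A0 A σb))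
    (F : Matrix (Fin m) (Fin m) ℝ)
    (hFV : Fᵀ * F = MV (qvec A b c xb))
    :
    (IsLocalMaxOn (fP A0 b0 A b c V) {x | qvec A b c x ∈ dV} xb →
      ∀ v : Fin m → ℝ, v ⬝ᵥ v = 1 →
        (Hmat A b E F xb *ᵥ v) ⬝ᵥ (Hmat A b E F xb *ᵥ v) ≤ 1) ∧
    (IsLocalMaxOn (Dfun A0 b0 A b c Vs) {σ | σ ∈ dVs ∧ (-(Amat A0 A σ)).PosDef} σb →
      ∀ v : Fin m → ℝ, v ⬝ᵥ v = 1 →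
        (Hmat A b E F xb *ᵥ v) ⬝ᵥ (Hmat A b E F xb *ᵥ v) ≤ 1) ∧
    ((∀ v : Fin m → ℝ, v ⬝ᵥ v = 1 →
        (Hmat A b E F xb *ᵥ v) ⬝ᵥ (Hmat A b E F xb *ᵥ v) < 1) →
      IsStrictLocalMaxOn (fP A0 b0 A b c V) {x | qvec A b c x ∈ dV} xb ∧
      IsStrictLocalMaxOn (Dfun A0 b0 A b c Vs)
        {σ | σ ∈ dVs ∧ (-(Amat A0 A σ)).PosDef} σb) ∧
    ((∀ i, (A i) *ᵥ xb = b i) →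
      IsStrictLocalMaxOn (fP A0 b0 A b c V) {x | qvec A b c x ∈ dV} xb ∧
      IsStrictLocalMaxOn (Dfun A0 b0 A b c Vs)
        {σ | σ ∈ dVs ∧ (-(Amat A0 A σ)).PosDef} σb) := by
  set H := Hmat A b E F xb
  have hH : H = (F * qvecJac A b xb * E⁻¹)ᵀ := Hmat_eq A b E F xb
  have hVd := hLeg.2.1
  have hdet := isUnit_det_of_posDef_neg hSneg
  have hDf := Dfun_eq_fP hconj hV.2.1 (interior_subset hX0) (hVd _ hX0) hdet hcrit1 hcrit2
  have hQ : Amat A0 A (gV (qvec A b c xb)) + (qvecJac A b xb)ᵀ * MV (qvec A b c xb) *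
      qvecJac A b xb = -(Eᵀ * E) + (qvecJac A b xb)ᵀ * (Fᵀ * F) * qvecJac A b xb := by
    rw [← hcrit2, hEA, hFV, neg_neg]
  have hprimal : IsLocalMax (fP A0 b0 A b c V) xb →
      ∀ v : Fin m → ℝ, v ⬝ᵥ v = 1 → (H *ᵥ v) ⬝ᵥ (H *ᵥ v) ≤ 1 := fun hmax v hv => by
    rw [hH, ← hv]
    exact transpose_contraction_of_neg_gram_add_gram_nonpos hE
      (fun u => hQ ▸ hmax.fP_hessian_nonpos hA0 hA hVd hX0 (hMV _ hX0) u) v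
  have hsuff : (∀ v : Fin m → ℝ, v ⬝ᵥ v = 1 → (H *ᵥ v) ⬝ᵥ (H *ᵥ v) < 1) →
      IsStrictLocalMaxOn (fP A0 b0 A b c V) {x | qvec A b c x ∈ dV} xb ∧
      IsStrictLocalMaxOn (Dfun A0 b0 A b c Vs) {σ | σ ∈ dVs ∧ (-(Amat A0 A σ)).PosDef} σb :=
    fun hlt => by
      rw [hH] at hlt
      have hstrict := eventually_fP_lt hA0 hA hVd hX0 (hMV _ hX0) (hcrit2 ▸ hcrit1) fun u hu =>
        hQ ▸ neg_gram_add_gram_negDef_of_transpose_contraction hE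
          (fun v hv => mulVec_dotProduct_self_lt_of_unit hlt hv) hu
      exact ⟨⟨_, hstrict, fun x hx => hx.1⟩, isStrictLocalMaxOn_Dfun hA hconj hX0 (hVd _ hX0)
        hdet hcrit1 hcrit2 hDf hstrict _ fun σ hσ => hσ.1⟩
  refine ⟨fun hmax => hprimal (hmax.isLocalMax ?_), fun hmax => hprimal ?_, hsuff,
    fun hAb => hsuff fun v _ => ?_⟩
  · exact (continuous_qvec hA b c).continuousAt.preimage_mem_nhds
      (mem_interior_iff_mem_nhds.mp hX0)
  · exact isLocalMax_fP_of_isLocalMaxOn_Dfun hA0 hA hconj hV.2.1 hVd hX0 (hMV _ hX0).continuousAt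
      hcrit2 hSneg hDf hmax
  · have hG : qvecJac A b xb = 0 := by
      ext
      simp [qvecJac, hAb]
    simp [hH, hG]

/-- If `x̄` is a local maximizer of `f` (on `dom f`) or `σ̄` is a local
maximizer of `D` (on `S⁻`), then `‖Hv‖ ≤ 1` for all unit `v`. Conversely, if `‖Hv‖ < 1` for
all unit `v`, then `x̄` and `σ̄` are strict local maximizers of `f` and `D` respectively; in
particular this holds when `A_i x̄ = b_i` for all `i`. -/
theorem statement14 {n m : ℕ}
    (A0 : Matrix (Fin n) (Fin n) ℝ) (A : Fin m → Matrix (Fin n) (Fin n) ℝ)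
    (b0 : Fin n → ℝ) (b : Fin m → Fin n → ℝ) (c : Fin m → ℝ)
    (hA0 : A0.IsSymm) (hA : ∀ i, (A i).IsSymm)
    (V Vs : (Fin m → ℝ) → ℝ) (dV dVs : Set (Fin m → ℝ))
    (gV gVs : (Fin m → ℝ) → (Fin m → ℝ)) (MV : (Fin m → ℝ) → Matrix (Fin m) (Fin m) ℝ)
    (hV : properLscConvex V dV) (hLeg : LegendreType V dV gV)
    (hMV : ∀ y ∈ interior dV, HasFDerivAt gV (matCLM (MV y)) y)
    (hMVpos : ∀ y ∈ interior dV, (MV y).PosDef)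
    (hconj : isConjugate V dV Vs dVs)
    (hgVs : ∀ σ ∈ interior dVs, HasFDerivAt Vs (dotCLM (gVs σ)) σ)
    (xb : Fin n → ℝ) (σb : Fin m → ℝ)
    (hX0 : qvec A b c xb ∈ interior dV)
    (hσint : σb ∈ interior dVs)
    (hSneg : (-(Amat A0 A σb)).PosDef)
    (hcrit1 : Amat A0 A σb *ᵥ xb = bvec b0 b σb)
    (hcrit2 : σb = gV (qvec A b c xb))
    (E : Matrix (Fin n) (Fin n) ℝ) (hE : IsUnit E.det)
    (hEA : Eᵀ * E = -(Amat A0 A σb))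
    (F : Matrix (Fin m) (Fin m) ℝ) (hF : IsUnit F.det)
    (hFV : Fᵀ * F = MV (qvec A b c xb))
    :
    (IsLocalMaxOn (fP A0 b0 A b c V) {x | qvec A b c x ∈ dV} xb →
      ∀ v : Fin m → ℝ, v ⬝ᵥ v = 1 →
        (Hmat A b E F xb *ᵥ v) ⬝ᵥ (Hmat A b E F xb *ᵥ v) ≤ 1) ∧
    (IsLocalMaxOn (Dfun A0 b0 A b c Vs) {σ | σ ∈ dVs ∧ (-(Amat A0 A σ)).PosDef} σb →
      ∀ v : Fin m → ℝ, v ⬝ᵥ v = 1 →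
        (Hmat A b E F xb *ᵥ v) ⬝ᵥ (Hmat A b E F xb *ᵥ v) ≤ 1) ∧
    ((∀ v : Fin m → ℝ, v ⬝ᵥ v = 1 →
        (Hmat A b E F xb *ᵥ v) ⬝ᵥ (Hmat A b E F xb *ᵥ v) < 1) →
      IsStrictLocalMaxOn (fP A0 b0 A b c V) {x | qvec A b c x ∈ dV} xb ∧
      IsStrictLocalMaxOn (Dfun A0 b0 A b c Vs)
        {σ | σ ∈ dVs ∧ (-(Amat A0 A σ)).PosDef} σb) ∧
    ((∀ i, (A i) *ᵥ xb = b i) →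
      IsStrictLocalMaxOn (fP A0 b0 A b c V) {x | qvec A b c x ∈ dV} xb ∧
      IsStrictLocalMaxOn (Dfun A0 b0 A b c Vs)
        {σ | σ ∈ dVs ∧ (-(Amat A0 A σ)).PosDef} σb) :=
  statement14_general A0 A b0 b c hA0 hA V Vs dV dVs gV MV hV hLeg hMV hconj xb σb hX0 hSneg hcrit1
    hcrit2 E hE hEA F hFV
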